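/- For every λ ∈ ℂ with λ ≠ 1, every integer n ≥ 1, every a ∈ ℤ_{≥0}, and every integer p with 0 ≤ p ≤ n-1, the Stirling number of the first kind satisfies S₁(n, p+1) = (1/(1-λ))^{an} · Σ_{k=0}^{an} Σ_{l=p}^{n-1} Σ_{m=p}^{l} C(an, k) · C(n-1, l) · C(l, m) · C(m, p) · k^{n-1-l} · (-λ)^{an-k} · H_{l-m}^{(an)}(λ) · B_{m-p}^{(n)}. -/

import Mathlib

/-!
Write `v = t / (e^t - 1)`. The Bernoulli series of order `α` is `v ^ α`, and the Frobenius–Euler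
series `h` of order `A = an` satisfies `(e^t - λ)^A h = (1 - λ)^A`. Reading the triple sum as a
binomial convolution of exponential generating functions, it is `(n-1)!` times the coefficient of
`t^(n-1)` in `(e^t - λ)^A · h · ∑_m C(m,p) B_{m-p}^{(n)} t^m/m!`, which collapses to
`(1 - λ)^A C(n-1,p) B_{n-1-p}^{(n)}`.

On the other side, differentiating `(e^t - 1) v = t` gives a first-order recurrence showing
`(n-1)! [t^(n-1)] v^n e^{xt} = (x-1)(x-2)⋯(x-n+1)`, so `x(x-1)⋯(x-n+1) = x B_{n-1}^{(n)}(x)` and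
comparing coefficients of `x^(p+1)` gives `S₁(n,p+1) = C(n-1,p) B_{n-1-p}^{(n)}`.
-/

/-- The formal power series `e^{ct} = ∑_{m≥0} c^m t^m / m!` over `ℂ`. -/
noncomputable def expPS (c : ℂ) : PowerSeries ℂ :=
  PowerSeries.mk fun m => c ^ m / (m.factorial : ℂ)

open PowerSeries Finset Nat

namespace PowerSeries

theorem factorial_mul_coeff_mul {R : Type*} [CommSemiring R] (P Q : R⟦X⟧) (n : ℕ) :
    (n ! : R) * coeff n (P * Q) = ∑ m ∈ range (n + 1),
      (n.choose m : R) * ((m ! : R) * coeff m P) * (((n - m)! : R) * coeff (n - m) Q) := by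
  rw [coeff_mul, Nat.sum_antidiagonal_eq_sum_range_succ_mk, mul_sum]
  refine sum_congr rfl fun m hm => ?_
  rw [← Nat.choose_mul_factorial_mul_factorial (mem_range_succ_iff.mp hm)]
  push_cast
  ring

variable {K : Type*} [Field K] [CharZero K]

noncomputable def egf (f : ℕ → K) : K⟦X⟧ :=
  mk fun m => f m / m !

theorem factorial_mul_coeff_egf (f : ℕ → K) (m : ℕ) : (m ! : K) * coeff m (egf f) = f m := by
  rw [egf, coeff_mk, mul_div_cancel₀ _ (Nat.cast_ne_zero.mpr m.factorial_ne_zero)]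

theorem factorial_mul_coeff_egf_mul_egf (f g : ℕ → K) (n : ℕ) :
    (n ! : K) * coeff n (egf f * egf g) =
      ∑ m ∈ range (n + 1), (n.choose m : K) * f m * g (n - m) := by
  simp only [factorial_mul_coeff_mul, factorial_mul_coeff_egf]

end PowerSeries

theorem expPS_eq_egf (c : ℂ) : expPS c = egf (c ^ ·) := rfl

theorem expPS_eq_rescale_exp (c : ℂ) : expPS c = rescale c (exp ℂ) := by
  ext m
  simp [expPS, coeff_exp, div_eq_mul_inv]

theorem expPS_zero : expPS 0 = 1 := by
  rw [expPS_eq_rescale_exp, rescale_zero, RingHom.comp_apply, constantCoeff_exp, map_one]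

theorem expPS_one_pow (k : ℕ) : expPS 1 ^ k = expPS k := by
  rw [expPS_eq_rescale_exp, rescale_one, RingHom.id_apply, exp_pow_eq_rescale_exp,
    expPS_eq_rescale_exp]

theorem constantCoeff_expPS (c : ℂ) : constantCoeff (expPS c) = 1 := by
  rw [expPS_eq_rescale_exp, ← coeff_zero_eq_constantCoeff_apply, coeff_rescale, pow_zero, one_mul,
    coeff_zero_eq_constantCoeff_apply, constantCoeff_exp]

theorem derivative_expPS (c : ℂ) : d⁄dX ℂ (expPS c) = C c * expPS c := by
  ext m
  rw [coeff_derivative, coeff_C_mul, expPS, coeff_mk, coeff_mk, Nat.factorial_succ]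
  push_cast
  field_simp
  ring

theorem expPS_one_sub_one_ne_zero : expPS 1 - 1 ≠ 0 := by
  intro h
  simpa [expPS, coeff_one] using congrArg (coeff 1) h

theorem factorial_mul_coeff_expPS_one_sub_C_pow (lam : ℂ) (A j : ℕ) :
    (j ! : ℂ) * coeff j ((expPS 1 - C lam) ^ A) =
      ∑ k ∈ range (A + 1), (A.choose k : ℂ) * (k : ℂ) ^ j * (-lam) ^ (A - k) := by
  rw [sub_eq_add_neg, ← map_neg, add_pow, map_sum, mul_sum]
  refine sum_congr rfl fun k _ => ?_
  rw [expPS_one_pow, ← map_pow, ← map_natCast C, mul_assoc, ← map_mul, coeff_mul_C,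
    ← mul_assoc, expPS_eq_egf, factorial_mul_coeff_egf]
  ring

section OneOverExpSubOne

variable {v : ℂ⟦X⟧} (hv : (expPS 1 - 1) * v = X)
include hv

theorem constantCoeff_eq_one_of_expPS_sub_one_mul_eq_X : constantCoeff v = 1 := by
  have h := congrArg (coeff 1) hv
  rw [coeff_mul, Nat.sum_antidiagonal_eq_sum_range_succ_mk] at h
  simpa [expPS, coeff_one, sum_range_succ] using h

theorem pow_eq_of_expPS_sub_one_pow_mul_eq_X_pow {w : ℂ⟦X⟧} {α : ℕ}
    (hw : (expPS 1 - 1) ^ α * w = X ^ α) : w = v ^ α :=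
  mul_left_cancel₀ (pow_ne_zero α expPS_one_sub_one_ne_zero) (by rw [hw, ← mul_pow, hv])

/-- Differentiate `(e^t - 1) v = t` and eliminate `e^t v = t + v`. -/
theorem X_mul_derivative_eq : X * d⁄dX ℂ v = v - X * v - v ^ 2 := by
  have hd := congrArg (d⁄dX ℂ) hv
  rw [Derivation.leibniz, derivative_X, map_sub, derivative_expPS, Derivation.map_one_eq_zero,
    map_one, one_mul, sub_zero, smul_eq_mul, smul_eq_mul] at hd
  linear_combination v * hd - (d⁄dX ℂ v + v) * hv

theorem X_mul_derivative_pow (n : ℕ) :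
    X * d⁄dX ℂ (v ^ (n + 1)) =
      C ((n : ℂ) + 1) * (v ^ (n + 1) - X * v ^ (n + 1) - v ^ (n + 2)) := by
  rw [Derivation.leibniz_pow, Nat.add_sub_cancel, smul_eq_mul, nsmul_eq_mul,
    ← map_natCast C (n + 1)]
  push_cast
  linear_combination C ((n : ℂ) + 1) * v ^ n * X_mul_derivative_eq hv

theorem coeff_succ_pow_succ_mul_expPS (n : ℕ) (x : ℂ) :
    ((n : ℂ) + 1) * coeff (n + 1) (v ^ (n + 2) * expPS x) =
      (x - ((n : ℂ) + 1)) * coeff n (v ^ (n + 1) * expPS x) := by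
  have hF : X * d⁄dX ℂ (v ^ (n + 1) * expPS x) =
      C ((n : ℂ) + 1) * (v ^ (n + 1) * expPS x - X * (v ^ (n + 1) * expPS x) -
        v ^ (n + 2) * expPS x) + C x * (X * (v ^ (n + 1) * expPS x)) := by
    rw [Derivation.leibniz, derivative_expPS, smul_eq_mul, smul_eq_mul]
    linear_combination expPS x * X_mul_derivative_pow hv n
  have h := congrArg (coeff (n + 1)) hF
  rw [coeff_succ_X_mul, coeff_derivative, map_add, coeff_C_mul, coeff_C_mul, map_sub, map_sub,
    coeff_succ_X_mul] at h
  linear_combination h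

theorem factorial_mul_coeff_pow_succ_mul_expPS (n : ℕ) (x : ℂ) :
    (n ! : ℂ) * coeff n (v ^ (n + 1) * expPS x) = ∏ i ∈ range n, (x - (i + 1)) := by
  induction n with
  | zero =>
    rw [factorial_zero, Nat.cast_one, one_mul, prod_range_zero, coeff_zero_eq_constantCoeff_apply,
      map_mul, pow_one, constantCoeff_eq_one_of_expPS_sub_one_mul_eq_X hv, constantCoeff_expPS,
      one_mul]
  | succ n ih =>
    rw [prod_range_succ, ← ih, factorial_succ, Nat.cast_mul, Nat.cast_succ]
    linear_combination (n ! : ℂ) * coeff_succ_pow_succ_mul_expPS hv n x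

end OneOverExpSubOne

theorem coeff_sum_range_C_mul_X_pow {R : Type*} [Semiring R] (c : ℕ → R) (N k : ℕ) :
    (∑ j ∈ range N, Polynomial.C (c j) * Polynomial.X ^ j).coeff k =
      if k < N then c k else 0 := by
  simp [Polynomial.finsetSum_coeff]

theorem stirling_eq_choose_mul_coeff {v : ℂ⟦X⟧} (hv : (expPS 1 - 1) * v = X) {n : ℕ}
    {s : ℕ → ℂ}
    (hs : ∀ x : ℂ, ∏ i ∈ range (n + 1), (x - i) = ∑ j ∈ range (n + 2), s j * x ^ j)
    {p : ℕ} (hp : p ≤ n) :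
    s (p + 1) = n.choose p * ((n - p)! * coeff (n - p) (v ^ (n + 1))) := by
  set d : ℕ → ℂ := fun j => n.choose j * ((n - j)! * coeff (n - j) (v ^ (n + 1)))
  have hprod (x : ℂ) :
      ∏ i ∈ range (n + 1), (x - i) = x * ∑ j ∈ range (n + 1), d j * x ^ j := by
    rw [prod_range_succ', mul_comm]
    push_cast
    rw [sub_zero, ← factorial_mul_coeff_pow_succ_mul_expPS hv, mul_comm (v ^ _),
      factorial_mul_coeff_mul]
    congr 1
    refine sum_congr rfl fun j _ => ?_
    rw [expPS_eq_egf, factorial_mul_coeff_egf]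
    ring
  have hpoly : ∑ j ∈ range (n + 2), Polynomial.C (s j) * Polynomial.X ^ j =
      Polynomial.X * ∑ j ∈ range (n + 1), Polynomial.C (d j) * Polynomial.X ^ j :=
    Polynomial.funext fun x => by simp [Polynomial.eval_finsetSum, ← hs, hprod]
  have h := congrArg (Polynomial.coeff · (p + 1)) hpoly
  simpa [Polynomial.coeff_X_mul, coeff_sum_range_C_mul_X_pow, hp, Nat.lt_succ_iff] using h

theorem sum_Icc_eq_sum_range {M : Type*} [AddCommMonoid M] {f : ℕ → M} {p : ℕ}
    (hf : ∀ m < p, f m = 0) (l : ℕ) :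
    ∑ m ∈ Icc p l, f m = ∑ m ∈ range (l + 1), f m := by
  refine sum_subset (fun m hm => ?_) (fun m hm hm' => hf m ?_)
  · rw [mem_Icc] at hm
    rw [mem_range]
    omega
  · rw [mem_Icc] at hm'
    rw [mem_range] at hm
    omega

theorem sum_choose_mul_eq_factorial_mul_coeff (lam : ℂ) (A N p : ℕ) (h b : ℕ → ℂ) :
    ∑ k ∈ range (A + 1), ∑ l ∈ Icc p N, ∑ m ∈ Icc p l,
        (A.choose k : ℂ) * (N.choose l : ℂ) * (l.choose m : ℂ) * (m.choose p : ℂ) *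
          (k : ℂ) ^ (N - l) * (-lam) ^ (A - k) * h (l - m) * b (m - p) =
      N ! * coeff N (egf (fun m => m.choose p * b (m - p)) * egf h * (expPS 1 - C lam) ^ A) := by
  rw [factorial_mul_coeff_mul, sum_comm, sum_Icc_eq_sum_range]
  · refine sum_congr rfl fun l _ => ?_
    rw [sum_comm, sum_Icc_eq_sum_range, factorial_mul_coeff_egf_mul_egf,
      factorial_mul_coeff_expPS_one_sub_C_pow, mul_sum _ _ (N.choose l : ℂ), sum_mul_sum]
    · refine sum_congr rfl fun m _ => sum_congr rfl fun k _ => ?_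
      ring
    · intro m hm
      exact sum_eq_zero fun k _ => by simp [Nat.choose_eq_zero_of_lt hm]
  · intro l hl
    simp only [Icc_eq_empty_of_lt hl, sum_empty, sum_const_zero]

/-- For `λ ≠ 1`, `n ≥ 1`, `a ∈ ℤ_{≥0}` and `0 ≤ p ≤ n-1`,
`S₁(n, p+1) = (1/(1-λ))^{an} ∑_{k=0}^{an} ∑_{l=p}^{n-1} ∑_{m=p}^{l}
 C(an,k) C(n-1,l) C(l,m) C(m,p) k^{n-1-l} (-λ)^{an-k} H_{l-m}^{(an)}(λ) B_{m-p}^{(n)}`.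
Here `H_m^{(α)}(x|λ)` is characterized by
`((1-λ)/(e^t-λ))^α e^{xt} = ∑_m H_m^{(α)}(x|λ) t^m/m!` with `H_m^{(α)}(λ) = H_m^{(α)}(0|λ)`,
the Bernoulli polynomials of order `α` by `(t/(e^t-1))^α e^{xt} = ∑_m B_m^{(α)}(x) t^m/m!`
with `B_m^{(α)} = B_m^{(α)}(0)`, and the Stirling numbers of the first kind `S₁(m,l)` by
`x(x-1)⋯(x-m+1) = ∑_{l=0}^m S₁(m,l) x^l`. -/
theorem stmt5 (lam : ℂ) (hlam : lam ≠ 1) (n : ℕ) (hn : 1 ≤ n) (a p : ℕ) (hp : p ≤ n - 1)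
    (H : ℕ → ℕ → ℂ → ℂ)
    (hH : ∀ (α : ℕ) (x : ℂ),
      (expPS 1 - PowerSeries.C lam) ^ α *
          PowerSeries.mk (fun m => H α m x / (m.factorial : ℂ)) =
        PowerSeries.C (1 - lam) ^ α * expPS x)
    (S1 : ℕ → ℕ → ℂ)
    (hS1 : ∀ (m : ℕ) (x : ℂ),
      ∏ i ∈ Finset.range m, (x - i) = ∑ j ∈ Finset.range (m + 1), S1 m j * x ^ j)
    (B : ℕ → ℕ → ℂ → ℂ)
    (hB : ∀ (α : ℕ) (x : ℂ),
      (expPS 1 - 1) ^ α *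
          PowerSeries.mk (fun m => B α m x / (m.factorial : ℂ)) =
        PowerSeries.X ^ α * expPS x) :
    S1 n (p + 1) =
      (1 / (1 - lam)) ^ (a * n) *
        ∑ k ∈ Finset.range (a * n + 1), ∑ l ∈ Finset.Icc p (n - 1), ∑ m ∈ Finset.Icc p l,
          ((a * n).choose k : ℂ) * ((n - 1).choose l : ℂ) * (l.choose m : ℂ) *
            (m.choose p : ℂ) * (k : ℂ) ^ (n - 1 - l) * (-lam) ^ (a * n - k) *
            H (a * n) (l - m) 0 * B n (m - p) 0 := by
  obtain ⟨n, rfl⟩ : ∃ n', n = n' + 1 := ⟨n - 1, by omega⟩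
  rw [Nat.add_sub_cancel] at hp ⊢
  set A := a * (n + 1)
  set v := egf fun m => B 1 m 0
  have hv : (expPS 1 - 1) * v = X := by
    have h := hB 1 0
    rw [pow_one, pow_one, expPS_zero, mul_one] at h
    exact h
  have hBv (α j : ℕ) : B α j 0 = j ! * coeff j (v ^ α) := by
    have hw : (expPS 1 - 1) ^ α * egf (fun m => B α m 0) = X ^ α := by
      have h := hB α 0
      rw [expPS_zero, mul_one] at h
      exact h
    rw [← pow_eq_of_expPS_sub_one_pow_mul_eq_X_pow hv hw, factorial_mul_coeff_egf]
  have hFE : egf (fun m => H A m 0) * (expPS 1 - C lam) ^ A = C ((1 - lam) ^ A) := by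
    have h := hH A 0
    rw [expPS_zero, mul_one, ← map_pow, mul_comm] at h
    exact h
  rw [sum_choose_mul_eq_factorial_mul_coeff lam A n p (H A · 0) (B (n + 1) · 0), mul_assoc, hFE,
    coeff_mul_C, ← mul_assoc (n ! : ℂ), factorial_mul_coeff_egf,
    stirling_eq_choose_mul_coeff hv (hS1 (n + 1)) hp, hBv]
  rw [mul_comm _ ((1 - lam) ^ A), ← mul_assoc ((1 / (1 - lam)) ^ A), ← mul_pow,
    one_div_mul_cancel (sub_ne_zero.mpr hlam.symm), one_pow, one_mul]
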